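/- arXiv:1309.2621 — 2 statements merged into one kernel-verified Lean document; each statement's English description precedes it below -/
import Mathlib

section
/- Fix an integer N ≥ 2 and positive reals σ_1, …, σ_N. Let A be the (N−1)×(N−1) symmetric tridiagonal matrix with A_{ii} = σ_i² + σ_{i+1}² for i = 1,…,N−1, A_{i,i+1} = A_{i+1,i} = −σ_{i+1}² for i = 1,…,N−2, and A_{ij} = 0 for |i−j| ≥ 2. Let ρ be the (N−1)×(N−1) matrix with ρ_{ij} = 2·min(i,j)·(N − max(i,j))/N. Then tr(ρA) = (2(N−1)/N)·(σ_1² + σ_2² + … + σ_N²). -/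
lemma aux_sum (N : ℕ) (hN : 2 ≤ N) (s : ℕ → ℝ) :
    (∑ i ∈ Finset.range (N-1),
        (2 * ((i:ℝ)+1) * ((N:ℝ) - ((i:ℝ)+1)) / N) * (s i + s (i+1)))
      - 2 * ∑ i ∈ Finset.range (N-1-1),
        (2 * ((i:ℝ)+1) * ((N:ℝ) - ((i:ℝ)+1) - 1) / N) * s (i+1)
      = 2 * ((N:ℝ) - 1) / N * ∑ p ∈ Finset.range N, s p := by
  have hNR : (N : ℝ) ≠ 0 := Nat.cast_ne_zero.mpr (by omega)
  set t : ℕ → ℝ := fun p => 2 * (p:ℝ) * ((N:ℝ) - p) / N with ht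
  set u : ℕ → ℝ := fun p => 2 * (p:ℝ) * ((N:ℝ) - p - 1) / N with hu
  set n := N - 1 with hn
  have hnN : n + 1 = N := by omega
  have hrange : Finset.range N = Finset.range (n + 1) := by rw [hnN]
  have hcast : ((n:ℕ):ℝ) = (N:ℝ) - 1 := by
    rw [hn, Nat.cast_sub (by omega)]; norm_num
  -- rewrite summands in terms of t, u
  have e1 : ∀ i : ℕ, (2 * ((i:ℝ)+1) * ((N:ℝ) - ((i:ℝ)+1)) / N) * (s i + s (i+1))
      = t (i+1) * s i + t (i+1) * s (i+1) := by
    intro i; simp only [ht]; push_cast; ring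
  have e2 : ∀ i : ℕ, (2 * ((i:ℝ)+1) * ((N:ℝ) - ((i:ℝ)+1) - 1) / N) * s (i+1)
      = u (i+1) * s (i+1) := by
    intro i; simp only [hu]; push_cast; ring
  simp_rw [e1, e2]
  rw [Finset.sum_add_distrib]
  have hP1 : ∑ i ∈ Finset.range n, t (i+1) * s i
      = (∑ p ∈ Finset.range N, t (p+1) * s p) - t (n+1) * s n := by
    rw [hrange, Finset.sum_range_succ]; ring
  have hP2 : ∑ i ∈ Finset.range n, t (i+1) * s (i+1)
      = ∑ p ∈ Finset.range N, t p * s p := by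
    rw [hrange, Finset.sum_range_succ']
    have ht0 : t 0 * s 0 = 0 := by simp [ht]
    rw [ht0, add_zero]
  have hQ1 : ∑ i ∈ Finset.range (n-1), u (i+1) * s (i+1)
      = ∑ p ∈ Finset.range N, u p * s p := by
    have hn1 : n - 1 + 1 = n := by omega
    have : ∑ p ∈ Finset.range n, u p * s p
        = (∑ i ∈ Finset.range (n-1), u (i+1) * s (i+1)) + u 0 * s 0 := by
      rw [← hn1, Finset.sum_range_succ']; norm_num
    have hu0 : u 0 * s 0 = 0 := by simp [hu]
    have hun : u n * s n = 0 := by simp only [hu, hcast]; ring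
    rw [hrange, Finset.sum_range_succ, hun, add_zero, this, hu0, add_zero]
  have htn : t (n+1) * s n = 0 := by
    simp only [ht]; push_cast [hcast]; ring
  rw [hP1, hP2, hQ1, htn]
  have key : ∀ p : ℕ, t (p+1) * s p + t p * s p - 2 * (u p * s p)
      = 2*((N:ℝ)-1)/N * s p := by
    intro p; simp only [ht, hu]; push_cast; field_simp; ring
  have : ∑ p ∈ Finset.range N, (2*((N:ℝ)-1)/N * s p)
      = ∑ p ∈ Finset.range N, (t (p+1) * s p + t p * s p - 2 * (u p * s p)) :=
    Finset.sum_congr rfl fun p _ => (key p).symm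
  rw [← Finset.mul_sum] at this
  rw [this, Finset.sum_sub_distrib, Finset.sum_add_distrib, Finset.mul_sum]
  ring


lemma aux_split (N : ℕ) (s : ℕ → ℝ) (i j : ℕ) :
    (2 * ((min (i+1) (j+1) : ℕ) : ℝ) * ((N:ℝ) - ((max (i+1) (j+1) : ℕ) : ℝ)) / N) *
        (if j = i then s j + s (j+1) else if j + 1 = i ∨ i + 1 = j then -s (max j i) else 0)
      = (if j = i then (2 * ((i:ℝ)+1) * ((N:ℝ) - ((i:ℝ)+1)) / N) * (s i + s (i+1)) else 0)
        + (if j = i + 1 then -((2 * ((i:ℝ)+1) * ((N:ℝ) - ((i:ℝ)+1) - 1) / N) * s (i+1)) else 0)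
        + (if j + 1 = i then -((2 * ((j:ℝ)+1) * ((N:ℝ) - ((j:ℝ)+1) - 1) / N) * s (j+1)) else 0) := by
  by_cases h1 : j = i
  · subst h1
    rw [if_pos rfl, if_pos rfl, if_neg (by omega), if_neg (by omega), min_self, max_self]
    push_cast; ring
  · by_cases h2 : j = i + 1
    · subst h2
      rw [if_neg h1, if_pos (by omega : i + 1 + 1 = i ∨ i + 1 = i + 1), if_neg h1, if_pos rfl,
        if_neg (by omega),
        show min (i+1) (i+1+1) = i + 1 by omega, show max (i+1) (i+1+1) = i + 2 by omega,
        show max (i+1) i = i + 1 by omega]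
      push_cast; ring
    · by_cases h3 : j + 1 = i
      · rw [if_neg h1, if_pos (Or.inl h3), if_neg h1, if_neg h2, if_pos h3,
          show min (i+1) (j+1) = j + 1 by omega, show max (i+1) (j+1) = j + 2 by omega,
          show max j i = j + 1 by omega]
        push_cast; ring
      · rw [if_neg h1, if_neg (by omega), if_neg h1, if_neg h2, if_neg h3]
        ring

lemma aux_double (N : ℕ) (hN : 2 ≤ N) (s : ℕ → ℝ) :
    ∑ i ∈ Finset.range (N-1), ∑ j ∈ Finset.range (N-1),
      (2 * ((min (i+1) (j+1) : ℕ) : ℝ) * ((N:ℝ) - ((max (i+1) (j+1) : ℕ) : ℝ)) / N) *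
        (if j = i then s j + s (j+1) else if j + 1 = i ∨ i + 1 = j then -s (max j i) else 0)
      = 2 * ((N:ℝ) - 1) / N * ∑ p ∈ Finset.range N, s p := by
  set n := N - 1 with hn
  set P : ℕ → ℝ := fun i => (2 * ((i:ℝ)+1) * ((N:ℝ) - ((i:ℝ)+1)) / N) * (s i + s (i+1))
    with hP
  set Q : ℕ → ℝ := fun i => -((2 * ((i:ℝ)+1) * ((N:ℝ) - ((i:ℝ)+1) - 1) / N) * s (i+1))
    with hQ
  have hrow : ∀ i ∈ Finset.range n, (∑ j ∈ Finset.range n,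
      (2 * ((min (i+1) (j+1) : ℕ) : ℝ) * ((N:ℝ) - ((max (i+1) (j+1) : ℕ) : ℝ)) / N) *
        (if j = i then s j + s (j+1) else if j + 1 = i ∨ i + 1 = j then -s (max j i) else 0))
      = P i + (if i + 1 < n then Q i else 0) + (if i = 0 then 0 else Q (i-1)) := by
    intro i hi
    rw [Finset.mem_range] at hi
    have := fun j => aux_split N s i j
    simp_rw [this]
    rw [Finset.sum_add_distrib, Finset.sum_add_distrib]
    congr 1
    · congr 1
      · rw [Finset.sum_ite_eq' (Finset.range n) i (fun _ => P i),
          if_pos (Finset.mem_range.mpr hi)]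
      · rw [Finset.sum_ite_eq' (Finset.range n) (i+1) (fun _ => Q i)]
        simp [Finset.mem_range]
    · rcases Nat.eq_zero_or_pos i with h0 | h0
      · subst h0; simp
      · obtain ⟨k, rfl⟩ : ∃ k, i = k + 1 := ⟨i - 1, by omega⟩
        rw [if_neg (by omega)]
        simp_rw [Nat.add_right_cancel_iff]
        rw [Finset.sum_ite_eq' (Finset.range n) k (fun j => Q j),
          if_pos (Finset.mem_range.mpr (by omega)), Nat.add_sub_cancel]
  rw [Finset.sum_congr rfl hrow]
  rw [Finset.sum_add_distrib, Finset.sum_add_distrib]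
  have hn1 : 1 ≤ n := by omega
  have h1 : ∑ i ∈ Finset.range n, (if i + 1 < n then Q i else 0)
      = ∑ i ∈ Finset.range (n-1), Q i := by
    obtain ⟨m, hm⟩ : ∃ m, n = m + 1 := ⟨n - 1, by omega⟩
    rw [hm, Finset.sum_range_succ, if_neg (by omega), add_zero, Nat.add_sub_cancel]
    exact Finset.sum_congr rfl fun i hi =>
      if_pos (by rw [Finset.mem_range] at hi; omega)
  have h2 : ∑ i ∈ Finset.range n, (if i = 0 then 0 else Q (i-1))
      = ∑ i ∈ Finset.range (n-1), Q i := by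
    obtain ⟨m, hm⟩ : ∃ m, n = m + 1 := ⟨n - 1, by omega⟩
    rw [hm, Finset.sum_range_succ', if_pos rfl, add_zero, Nat.add_sub_cancel]
    exact Finset.sum_congr rfl fun i hi => by
      rw [if_neg (Nat.succ_ne_zero i), Nat.add_sub_cancel]
  rw [h1, h2, ← aux_sum N hN s]
  simp only [hP, hQ]
  rw [Finset.sum_neg_distrib]
  ring

/-- For the covariance matrix `A` of the gap process of `N` competing Brownian particles
with diffusion coefficients `σ_1², …, σ_N²` and `ρ = R⁻¹` the inverse reflection matrix,
`tr(ρA) = (2(N-1)/N) ∑_p σ_p²`. -/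
theorem trace_rho_mul_A (N : ℕ) (hN : 2 ≤ N) (σ : Fin N → ℝ) (hσ : ∀ i, 0 < σ i) :
    let A : Matrix (Fin (N - 1)) (Fin (N - 1)) ℝ := fun i j =>
      if i = j then
        σ ⟨i.1, by have := i.isLt; omega⟩ ^ 2 + σ ⟨i.1 + 1, by have := i.isLt; omega⟩ ^ 2
      else if i.1 + 1 = j.1 ∨ j.1 + 1 = i.1 then
        -σ ⟨max i.1 j.1, by have := i.isLt; have := j.isLt; omega⟩ ^ 2
      else 0
    let ρ : Matrix (Fin (N - 1)) (Fin (N - 1)) ℝ := fun i j =>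
      2 * (min (i.1 + 1) (j.1 + 1) : ℕ) * ((N : ℝ) - (max (i.1 + 1) (j.1 + 1) : ℕ)) / N
    Matrix.trace (ρ * A) = 2 * ((N : ℝ) - 1) / N * ∑ p, σ p ^ 2 := by
  intro A ρ
  set s : ℕ → ℝ := fun k => if h : k < N then σ ⟨k, h⟩ ^ 2 else 0 with hs
  set g : ℕ → ℕ → ℝ := fun i j =>
      (2 * ((min (i+1) (j+1) : ℕ) : ℝ) * ((N:ℝ) - ((max (i+1) (j+1) : ℕ) : ℝ)) / N) *
        (if j = i then s j + s (j+1) else if j + 1 = i ∨ i + 1 = j then -s (max j i) else 0)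
    with hg
  have hsv : ∀ (k : ℕ) (h : k < N), s k = σ ⟨k, h⟩ ^ 2 := fun k h => dif_pos h
  have e2 : ∀ i j : Fin (N-1), ρ i j * A j i = g i.1 j.1 := by
    intro i j
    have hi := i.isLt
    have hj := j.isLt
    simp only [A, ρ, hg]
    congr 1
    by_cases h1 : j = i
    · subst h1
      rw [if_pos rfl, if_pos rfl, hsv j.1 (by omega), hsv (j.1+1) (by omega)]
    · rw [if_neg h1, if_neg (fun hc => h1 (Fin.ext hc))]
      by_cases h2 : j.1 + 1 = i.1 ∨ i.1 + 1 = j.1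
      · rw [if_pos h2, if_pos h2, hsv (max j.1 i.1) (by omega)]
      · rw [if_neg h2, if_neg h2]
  have e1 : Matrix.trace (ρ * A) = ∑ i : Fin (N-1), ∑ j : Fin (N-1), g i.1 j.1 := by
    simp only [Matrix.trace, Matrix.diag, Matrix.mul_apply]
    exact Finset.sum_congr rfl fun i _ => Finset.sum_congr rfl fun j _ => e2 i j
  have e3 : ∀ i : Fin (N-1), ∑ j : Fin (N-1), g i.1 j.1
      = ∑ j ∈ Finset.range (N-1), g i.1 j :=
    fun i => Fin.sum_univ_eq_sum_range (fun j => g i.1 j) (N-1)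
  rw [e1, Finset.sum_congr rfl fun i _ => e3 i,
    Fin.sum_univ_eq_sum_range (fun i => ∑ j ∈ Finset.range (N-1), g i j) (N-1)]
  rw [hg] at *
  rw [aux_double N hN s]
  congr 1
  rw [← Fin.sum_univ_eq_sum_range (fun p => s p) N]
  exact Finset.sum_congr rfl fun p _ => (hsv p.1 p.isLt).symm ▸ rfl
end

section
/- Fix an integer N ≥ 4 and positive reals σ_1, …, σ_N. Define c_{k,l}(σ) := tr(ρA) − 2(ρAρ)_{kl}/ρ_{kl}, where A is the (N−1)×(N−1) symmetric tridiagonal matrix with A_{ii} = σ_i² + σ_{i+1}², A_{i,i+1} = A_{i+1,i} = −σ_{i+1}², A_{ij} = 0 for |i−j| ≥ 2, and ρ is the (N−1)×(N−1) matrix with ρ_{ij} = 2·min(i,j)·(N − max(i,j))/N. Then for all k, l with 2 ≤ k ≤ l ≤ N−2, we have c_{k,l}(σ) ≥ 0. -/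
/-!
Write `wₘ = σₘ²` and let `D` be the gap operator, `(D x)ᵢ = x_{i+1} - xᵢ`, with columns `uₘ`.
Then `A = D diag(w) Dᵀ = ∑ₘ wₘ uₘ uₘᵀ`, so `tr(ρA) = ∑ₘ wₘ uₘᵀ ρ uₘ` and
`(ρAρ)_{kl} = ∑ₘ wₘ (ρuₘ)_k (ρuₘ)_l`. The kernel `2 min(a,b) (N - max(a,b)) / N` vanishes at
`b = 0` and `b = N`, so summation by parts makes `ρuₘ` (minus) its discrete derivative in `b`: a
step function of `a` with values `2(N - a)/N` and `-2a/N`. One more difference gives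
`uₘᵀ ρ uₘ = 2(N - 1)/N` for every `m`. Hence
`c_{k,l} = ∑ₘ wₘ (2(N - 1)/N - 2 (ρuₘ)_k (ρuₘ)_l / ρ_{kl})`, and each bracket is nonnegative
by an elementary inequality once `2 ≤ k ≤ l ≤ N - 2`.
-/

open Finset Matrix

namespace Matrix

variable {ι κ R : Type*} [Fintype κ] [DecidableEq κ] [CommRing R]

theorem trace_mul_mul_diagonal_mul_transpose [Fintype ι] (ρ : Matrix ι ι R) (D : Matrix ι κ R)
    (w : κ → R) :
    trace (ρ * (D * diagonal w * Dᵀ)) = ∑ m, w m * (Dᵀ * (ρ * D)) m m := by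
  rw [show ρ * (D * diagonal w * Dᵀ) = ρ * D * diagonal w * Dᵀ by simp only [Matrix.mul_assoc],
    trace_mul_comm, ← Matrix.mul_assoc, ← Matrix.mul_assoc]
  simp only [trace, diag_apply, mul_diagonal, mul_comm]

theorem mul_diagonal_mul_transpose_apply (G : Matrix ι κ R) (w : κ → R) (i j : ι) :
    (G * diagonal w * Gᵀ) i j = ∑ m, w m * (G i m * G j m) := by
  rw [mul_apply]
  simp only [mul_diagonal, transpose_apply]
  exact sum_congr rfl fun m _ => by ring

theorem IsSymm.mul_mul_diagonal_mul_transpose_mul [Fintype ι] {ρ : Matrix ι ι R} (hρ : ρ.IsSymm)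
    (D : Matrix ι κ R) (w : κ → R) :
    ρ * (D * diagonal w * Dᵀ) * ρ = ρ * D * diagonal w * (ρ * D)ᵀ := by
  rw [transpose_mul, hρ.eq]
  simp only [Matrix.mul_assoc]

end Matrix

theorem Fin.sum_ite_val_eq {R : Type*} [AddCommMonoid R] {N : ℕ} (f : Fin N → R) {c : ℕ}
    (hc : c < N) : (∑ m : Fin N, if (m : ℕ) = c then f m else 0) = f ⟨c, hc⟩ := by
  have hval (m : Fin N) : (m : ℕ) = c ↔ m = ⟨c, hc⟩ := (Fin.ext_iff (b := ⟨c, hc⟩)).symm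
  simp only [hval, sum_ite_eq', mem_univ, if_true]

namespace CompetingBrownian

/-- `ρ_{ab} = green N a b` in the paper's 1-based indexing, extended to `a, b ∈ {0, …, N}`. -/
noncomputable def green (N a b : ℕ) : ℝ :=
  2 * (min a b : ℕ) * ((N : ℝ) - (max a b : ℕ)) / N

noncomputable def greenSlope (N a m : ℕ) : ℝ :=
  if m < a then 2 * ((N : ℝ) - a) / N else -(2 * a / N)

theorem green_comm (N a b : ℕ) : green N a b = green N b a := by
  simp only [green, min_comm, max_comm]

theorem green_of_le {N a b : ℕ} (h : a ≤ b) : green N a b = 2 * a * (N - b) / N := by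
  simp [green, min_eq_left h, max_eq_right h]

theorem green_zero_right (N a : ℕ) : green N a 0 = 0 := by
  simp [green]

theorem green_self_right {N a : ℕ} (h : a ≤ N) : green N a N = 0 := by
  simp [green_of_le h]

theorem green_pos_of_le {N a b : ℕ} (ha : 0 < a) (hab : a ≤ b) (hb : b < N) :
    0 < green N a b := by
  have ha' : (0 : ℝ) < a := by exact_mod_cast ha
  have hb' : (b : ℝ) < N := by exact_mod_cast hb
  rw [green_of_le hab]
  exact div_pos (mul_pos (by positivity) (by linarith)) (by linarith)

theorem green_succ_sub (N a m : ℕ) : green N a (m + 1) - green N a m = greenSlope N a m := by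
  rcases lt_or_ge m a with h | h
  · rw [green_comm, green_of_le (by omega : m + 1 ≤ a), green_comm, green_of_le h.le,
      greenSlope, if_pos h]
    push_cast
    ring
  · rw [green_of_le (by omega : a ≤ m + 1), green_of_le h, greenSlope, if_neg (by omega)]
    push_cast
    ring

theorem greenSlope_zero_left (N m : ℕ) : greenSlope N 0 m = 0 := by
  simp [greenSlope]

theorem greenSlope_self_left {N m : ℕ} (h : m < N) : greenSlope N N m = 0 := by
  simp [greenSlope, h]

theorem greenSlope_succ_sub {N : ℕ} (hN : N ≠ 0) (m : ℕ) :
    greenSlope N (m + 1) m - greenSlope N m m = 2 * ((N : ℝ) - 1) / N := by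
  simp only [greenSlope, lt_irrefl, if_false, lt_add_one, if_true]
  push_cast
  field_simp
  ring

theorem two_mul_greenSlope_mul_le {N a b : ℕ} (ha : 2 ≤ a) (hab : a ≤ b) (hb : b + 2 ≤ N)
    (m : ℕ) : 2 * (greenSlope N a m * greenSlope N b m) ≤ 2 * ((N : ℝ) - 1) / N * green N a b := by
  have ha' : (2 : ℝ) ≤ a := by exact_mod_cast ha
  have hab' : (a : ℝ) ≤ b := by exact_mod_cast hab
  have hb' : (b : ℝ) + 2 ≤ N := by exact_mod_cast hb
  have hN : (0 : ℝ) < N := by linarith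
  have hNb : (0 : ℝ) ≤ N - b := by linarith
  rw [green_of_le hab, greenSlope, greenSlope]
  split_ifs with hma hmb hmb
  · field_simp
    nlinarith [mul_nonneg (by linarith : (0 : ℝ) ≤ a - 2) hNb]
  · omega
  · field_simp
    nlinarith [mul_nonneg (by linarith : (0 : ℝ) ≤ a) hNb]
  · field_simp
    nlinarith [mul_nonneg (by linarith : (0 : ℝ) ≤ a) hNb]

/-- Row `i` (0-based) maps particle positions `x` to the gap `x_{i+1} - x_i`. -/
def gapMatrix (N : ℕ) : Matrix (Fin (N - 1)) (Fin N) ℝ :=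
  of fun i m => (if (m : ℕ) = i + 1 then 1 else 0) - (if (m : ℕ) = i then 1 else 0)

noncomputable def greenMatrix (N : ℕ) : Matrix (Fin (N - 1)) (Fin (N - 1)) ℝ :=
  of fun i j => green N (i + 1) (j + 1)

theorem greenMatrix_isSymm (N : ℕ) : (greenMatrix N).IsSymm :=
  IsSymm.ext fun _ _ => green_comm N _ _

theorem sum_mul_gapMatrix {N : ℕ} (f : Fin N → ℝ) (i : Fin (N - 1)) :
    ∑ m, f m * gapMatrix N i m = f ⟨i + 1, by omega⟩ - f ⟨i, by omega⟩ := by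
  simp only [gapMatrix, of_apply, mul_sub, mul_ite, mul_one, mul_zero, sum_sub_distrib]
  rw [Fin.sum_ite_val_eq f, Fin.sum_ite_val_eq f]

theorem sum_gapMatrix_mul {N : ℕ} (f : ℕ → ℝ) (h0 : f 0 = 0) (hN : f N = 0) (m : Fin N) :
    ∑ i : Fin (N - 1), f (i + 1) * gapMatrix N i m = f m - f (m + 1) := by
  obtain ⟨n, rfl⟩ : ∃ n, N = n + 1 := ⟨N - 1, by have := m.isLt; omega⟩
  simp only [gapMatrix, of_apply, mul_sub, mul_ite, mul_one, mul_zero, sum_sub_distrib]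
  rw [Fin.sum_univ_eq_sum_range (fun i => if (m : ℕ) = i + 1 then f (i + 1) else 0),
    Fin.sum_univ_eq_sum_range (fun i => if (m : ℕ) = i then f (i + 1) else 0), Nat.add_sub_cancel]
  have hm := m.isLt
  have hshift := sum_range_succ' (fun i => if (m : ℕ) = i then f i else 0) n
  have hlast := sum_range_succ (fun i => if (m : ℕ) = i then f (i + 1) else 0) n
  simp only [sum_ite_eq, mem_range, hm, if_true, h0, ite_self, add_zero] at hshift hlast
  rw [← hshift, hlast]
  split_ifs with h <;> simp [h, hN]

theorem gapMatrix_mul_diagonal_mul_transpose_apply {N : ℕ} (w : Fin N → ℝ) (i j : Fin (N - 1)) :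
    (gapMatrix N * diagonal w * (gapMatrix N)ᵀ) i j =
      if i = j then w ⟨i, by omega⟩ + w ⟨i + 1, by omega⟩
      else if (i : ℕ) + 1 = j ∨ (j : ℕ) + 1 = i then -w ⟨max i j, by omega⟩
      else 0 := by
  simp only [mul_apply (M := gapMatrix N * diagonal w), transpose_apply, mul_diagonal]
  rw [sum_mul_gapMatrix (fun m => gapMatrix N i m * w m)]
  simp only [gapMatrix, of_apply, Fin.ext_iff]
  grind

theorem greenMatrix_mul_gapMatrix_apply {N : ℕ} (k : Fin (N - 1)) (m : Fin N) :
    (greenMatrix N * gapMatrix N) k m = -greenSlope N (k + 1) m := by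
  rw [mul_apply, ← green_succ_sub, neg_sub]
  exact sum_gapMatrix_mul (green N (k + 1)) (green_zero_right N _) (green_self_right (by omega)) m

theorem gapMatrix_transpose_mul_greenMatrix_mul_gapMatrix_apply_self {N : ℕ} (m : Fin N) :
    ((gapMatrix N)ᵀ * (greenMatrix N * gapMatrix N)) m m = 2 * ((N : ℝ) - 1) / N := by
  have hN : N ≠ 0 := by have := m.isLt; omega
  simp only [mul_apply (M := (gapMatrix N)ᵀ), transpose_apply, greenMatrix_mul_gapMatrix_apply]
  rw [← greenSlope_succ_sub hN, ← neg_sub_neg, ← sum_gapMatrix_mul (fun a => -greenSlope N a m)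
    (by simp [greenSlope_zero_left]) (by simp [greenSlope_self_left m.isLt])]
  exact sum_congr rfl fun i _ => mul_comm _ _

end CompetingBrownian

open CompetingBrownian in
/-- For `N ≥ 4` and `2 ≤ k ≤ l ≤ N−2` (1-based), the quantity
`c_{k,l}(σ) := tr(ρA) − 2 (ρAρ)_{kl} / ρ_{kl}` is nonnegative. -/
theorem ckl_nonneg_interior (N : ℕ) (σ : Fin N → ℝ) :
    let A : Matrix (Fin (N - 1)) (Fin (N - 1)) ℝ := fun i j =>
      if i = j then
        σ ⟨i.1, by have := i.isLt; omega⟩ ^ 2 + σ ⟨i.1 + 1, by have := i.isLt; omega⟩ ^ 2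
      else if i.1 + 1 = j.1 ∨ j.1 + 1 = i.1 then
        -σ ⟨max i.1 j.1, by have := i.isLt; have := j.isLt; omega⟩ ^ 2
      else 0
    let ρ : Matrix (Fin (N - 1)) (Fin (N - 1)) ℝ := fun i j =>
      2 * (min (i.1 + 1) (j.1 + 1) : ℕ) * ((N : ℝ) - (max (i.1 + 1) (j.1 + 1) : ℕ)) / N
    ∀ k l : Fin (N - 1), 2 ≤ k.1 + 1 → k ≤ l → l.1 + 1 ≤ N - 2 →
      0 ≤ Matrix.trace (ρ * A) - 2 * (ρ * A * ρ) k l / ρ k l := by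
  intro A ρ k l hk hkl hl
  have hA : A = gapMatrix N * diagonal (fun m => σ m ^ 2) * (gapMatrix N)ᵀ :=
    Matrix.ext fun i j => (gapMatrix_mul_diagonal_mul_transpose_apply (fun m => σ m ^ 2) i j).symm
  have hρ : ρ = greenMatrix N := rfl
  have hρkl : 0 < ρ k l := green_pos_of_le (by omega) (Nat.succ_le_succ hkl) (by omega)
  rw [sub_nonneg, div_le_iff₀ hρkl, hA, hρ,
    (greenMatrix_isSymm N).mul_mul_diagonal_mul_transpose_mul,
    trace_mul_mul_diagonal_mul_transpose, mul_diagonal_mul_transpose_apply, mul_sum, sum_mul]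
  refine sum_le_sum fun m _ => ?_
  rw [greenMatrix_mul_gapMatrix_apply, greenMatrix_mul_gapMatrix_apply, neg_mul_neg,
    gapMatrix_transpose_mul_greenMatrix_mul_gapMatrix_apply_self, mul_left_comm, mul_assoc]
  exact mul_le_mul_of_nonneg_left
    (two_mul_greenSlope_mul_le hk (Nat.succ_le_succ hkl) (by omega) m) (sq_nonneg _)
end
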